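/- Let X and Y be types, f : X → X, h : X → Y, with the sets [x]_k, [x]_k^+ and [x]_{-1}^+ = X as in the context. Suppose Assumption 1 holds with some p ≥ 1 (for every x ∈ X, the set [x]_{p-1} contains at most one element) and Assumption 2 holds (for all x, x̂ and k, x̂ ∈ [x]_k^+ implies [x̂]_k^+ = [x]_k^+). For x̂ ∈ X and y in the image of h, let π(x̂, y) be the largest index j ∈ {-1, 0, …, p-2} such that [x̂]_j^+ ∩ h^{-1}(y) ≠ ∅. Then for every ℓ ∈ {0, 1, …, p-1} and every x, x̂ ∈ X with x̂ ∈ [x]_{ℓ-1}^+, every point x̂⁺ ∈ f '' ( [x̂]_{π(x̂, h(x))}^+ ∩ h^{-1}(h(x)) ) satisfies x̂⁺ ∈ f '' ([x]_ℓ), and moreover f '' ([x]_ℓ) ⊆ [f(x)]_ℓ^+; in particular x̂ ∈ [x]_{ℓ-1}^+ implies x̂⁺ ∈ [f(x)]_ℓ^+. -/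
import Mathlib


/-- The equivalence class `[x]ₖ`:
`[x]₀ = {z | h z = h x}`, `[x]ₖ⁺ = f '' [f⁻¹ x]ₖ`, `[x]_{k+1} = [x]ₖ⁺ ∩ [x]₀`. -/
def cls {X Y : Type*} (f : X → X) (h : X → Y) : ℕ → X → Set X
  | 0, x => {z | h z = h x}
  | k + 1, x => {v | ∃ z w, f w = x ∧ z ∈ cls f h k w ∧ f z = v} ∩ {z | h z = h x}

/-- The set `[x]ₖ⁺ = f '' [f⁻¹ x]ₖ`. -/
def clsPlus {X Y : Type*} (f : X → X) (h : X → Y) (k : ℕ) (x : X) : Set X :=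
  {v | ∃ z w, f w = x ∧ z ∈ cls f h k w ∧ f z = v}

/-- The sets `[x]_{j-1}⁺` indexed by the shifted index `j ∈ ℕ` (so that the index `j`
stands for `j - 1 ∈ {-1, 0, 1, …}`); in particular `[x]_{-1}⁺ = X`. -/
def clsPlusE {X Y : Type*} (f : X → X) (h : X → Y) : ℕ → X → Set X
  | 0, _ => Set.univ
  | k + 1, x => clsPlus f h k x

theorem cls_succ_subset' {X Y : Type*} (f : X → X) (h : X → Y) :
    ∀ k (w : X), cls f h (k + 1) w ⊆ cls f h k w := by
  intro k
  induction k with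
  | zero => intro w v hv; exact hv.2
  | succ k ih =>
    intro w v hv
    obtain ⟨⟨z, w', hw', hz, hfz⟩, hv0⟩ := hv
    exact ⟨⟨z, w', hw', ih w' hz, hfz⟩, hv0⟩

theorem cls_le' {X Y : Type*} (f : X → X) (h : X → Y) {m n : ℕ} (hmn : m ≤ n)
    (w : X) : cls f h n w ⊆ cls f h m w := by
  induction n with
  | zero => simp_all
  | succ n ih =>
    rcases Nat.lt_or_ge m (n + 1) with hlt | hge
    · exact fun v hv => ih (Nat.lt_succ_iff.mp hlt) (cls_succ_subset' f h n w hv)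
    · have : m = n + 1 := le_antisymm hmn hge
      subst this; exact fun v hv => hv

theorem clsPlus_le' {X Y : Type*} (f : X → X) (h : X → Y) {m n : ℕ} (hmn : m ≤ n)
    (x : X) : clsPlus f h n x ⊆ clsPlus f h m x := by
  rintro v ⟨z, w, hw, hz, hfz⟩
  exact ⟨z, w, hw, cls_le' f h hmn w hz, hfz⟩

theorem clsPlusE_le' {X Y : Type*} (f : X → X) (h : X → Y) {m n : ℕ} (hmn : m ≤ n)
    (x : X) : clsPlusE f h n x ⊆ clsPlusE f h m x := by
  match m, n, hmn with
  | 0, _, _ => intro v _; trivial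
  | m + 1, n + 1, hmn => exact clsPlus_le' f h (Nat.succ_le_succ_iff.mp hmn) x

theorem cls_mem_self' {X Y : Type*} (f : X → X) (h : X → Y) :
    ∀ k (w : X), (cls f h k w).Nonempty → w ∈ cls f h k w := by
  intro k
  induction k with
  | zero => intro w _; rfl
  | succ k ih =>
    rintro w ⟨v, ⟨z, w', hw', hz, hfz⟩, hv0⟩
    exact ⟨⟨w', w', hw', ih w' ⟨z, hz⟩, hw'⟩, rfl⟩

/-- (Key claim in the proof of Theorem 3.) Under Assumptions 1 and 2 and with the map
`π` as in the observer construction (shifted indexing: `clsPlusE f h ℓ x = [x]_{ℓ-1}⁺`),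
for every `ℓ ∈ {0, …, p-1}` and all `x, x̂` with `x̂ ∈ [x]_{ℓ-1}⁺`:
every `x̂⁺ ∈ f ([x̂]_{π(x̂,h(x))}⁺ ∩ h⁻¹(h x))` lies in `f ([x]_ℓ)`, and moreover
`f ([x]_ℓ) ⊆ [f x]_ℓ⁺`; in particular `x̂ ∈ [x]_{ℓ-1}⁺ ⟹ x̂⁺ ∈ [f x]_ℓ⁺`. -/
theorem stmt10 {X Y : Type*} (f : X → X) (h : X → Y) (p : ℕ) (hp : 1 ≤ p)
    (hassume1 : ∀ x : X, (cls f h (p - 1) x).Subsingleton)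
    (hassume2 : ∀ (x xhat : X) (k : ℕ),
      xhat ∈ clsPlus f h k x → clsPlus f h k xhat = clsPlus f h k x)
    (π : X → Y → ℕ)
    (hπle : ∀ (xhat : X) (y : Y), y ∈ Set.range h → π xhat y ≤ p - 1)
    (hπne : ∀ (xhat : X) (y : Y), y ∈ Set.range h →
      (clsPlusE f h (π xhat y) xhat ∩ h ⁻¹' {y}).Nonempty)
    (hπmax : ∀ (xhat : X) (y : Y) (j : ℕ), y ∈ Set.range h → j ≤ p - 1 →
      (clsPlusE f h j xhat ∩ h ⁻¹' {y}).Nonempty → j ≤ π xhat y) :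
    ∀ ℓ : ℕ, ℓ ≤ p - 1 → ∀ x xhat : X, xhat ∈ clsPlusE f h ℓ x →
      (∀ xhatPlus ∈ f '' (clsPlusE f h (π xhat (h x)) xhat ∩ h ⁻¹' {h x}),
        xhatPlus ∈ f '' cls f h ℓ x) ∧
      f '' cls f h ℓ x ⊆ clsPlus f h ℓ (f x) := by
  intro ℓ hℓ x xhat hxhat
  constructor
  · rintro xp ⟨a, ⟨haE, haH⟩, rfl⟩
    have haH' : h a = h x := haH
    have hyr : h x ∈ Set.range h := ⟨x, rfl⟩
    have key : a ∈ cls f h ℓ x := by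
      cases ℓ with
      | zero => exact haH'
      | succ k =>
        have hx' : xhat ∈ clsPlus f h k x := hxhat
        obtain ⟨z, w, hw, hz, hfz⟩ := hx'
        have hwmem : w ∈ cls f h k w := cls_mem_self' f h k w ⟨z, hz⟩
        have hxmem : x ∈ clsPlus f h k x := ⟨w, w, hw, hwmem, hw⟩
        have heq := hassume2 x xhat k hxhat
        have hne : (clsPlusE f h (k + 1) xhat ∩ h ⁻¹' {h x}).Nonempty := by
          refine ⟨x, ?_, rfl⟩
          show x ∈ clsPlus f h k xhat
          rw [heq]; exact hxmem
        have hle : k + 1 ≤ π xhat (h x) := hπmax xhat (h x) (k + 1) hyr hℓ hne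
        have h1 : a ∈ clsPlusE f h (k + 1) xhat := clsPlusE_le' f h hle xhat haE
        have h2 : a ∈ clsPlus f h k x := heq ▸ h1
        exact ⟨h2, haH'⟩
    exact ⟨a, key, rfl⟩
  · rintro xp ⟨b, hb, rfl⟩
    exact ⟨b, x, rfl, hb, rfl⟩
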